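/- arXiv:2507.14012 — 2 statements merged into one kernel-verified Lean document; each statement's English description precedes it below -/
import Mathlib

section
/- Let A ⊂ ℝ³ be a fixed bounded open set and let Ω_n ⊂ ℝ³ be Borel sets of finite perimeter with Ω_n ⊂ ℓ_n A, |Ω_n| → m > 0, and I[Ω_n] ≤ μ*|Ω_n| + C/ℓ_n for some sequence ℓ_n → ∞. If C < m**²/diam(A), then the number K of droplets produced by the decomposition theorem equals 1, i.e. along the extracted subsequence the sets Ω_n consist of a single droplet. -/
open MeasureTheory Metric Set Filter Bornology
open scoped Topology ENNReal NNReal Pointwise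

noncomputable section

/-- Three-dimensional Euclidean space. -/
abbrev E3 : Type := EuclideanSpace ℝ (Fin 3)

/-- The divergence of a vector field on `E3`, defined as the trace of its derivative. -/
def divg (φ : E3 → E3) (x : E3) : ℝ :=
  LinearMap.trace ℝ E3 (fderiv ℝ φ x : E3 →ₗ[ℝ] E3)

/-- The candidate values `∫_Ω div φ` over `C¹` compactly supported vector fields bounded by one. -/
def perCand (Ω : Set E3) : Set ℝ :=
  {a : ℝ | ∃ φ : E3 → E3, ContDiff ℝ 1 φ ∧ HasCompactSupport φ ∧
      (∀ x, ‖φ x‖ ≤ 1) ∧ a = ∫ x in Ω, divg φ x}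

/-- The perimeter of a set, in the sense of geometric measure theory. -/
def per (Ω : Set E3) : ℝ := sSup (perCand Ω)

/-- A set has finite perimeter if the family of integrals defining the perimeter is
bounded above. -/
def HasFinPer (Ω : Set E3) : Prop := BddAbove (perCand Ω)

/-- The Lebesgue volume of a set as a real number. -/
def vol (Ω : Set E3) : ℝ := (volume Ω).toReal

/-- The liquid drop energy `𝓔_Λ[ρ,Ω]`. -/
def ldEnergy (Λ : Set E3) (ρ : ℝ) (Ω : Set E3) : ℝ :=
  per Ω + (1/2) * ∫ x, ∫ y,
    (Set.indicator Ω (fun _ => (1:ℝ)) x - ρ * Set.indicator Λ (fun _ => (1:ℝ)) x) *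
      (Set.indicator Ω (fun _ => (1:ℝ)) y - ρ * Set.indicator Λ (fun _ => (1:ℝ)) y) / ‖x - y‖

/-- The neutral ground state energy `E_Λ(ρ)`. -/
def EE (Λ : Set E3) (ρ : ℝ) : ℝ :=
  sInf {t : ℝ | ∃ Ω : Set E3, MeasurableSet Ω ∧ Ω ⊆ Λ ∧ HasFinPer Ω ∧
    vol Ω = ρ * vol Λ ∧ t = ldEnergy Λ ρ Ω}

/-- The liquid drop energy `I[Ω]` of an isolated droplet (no background). -/
def II (Ω : Set E3) : ℝ :=
  per Ω + (1/2) * ∫ x in Ω, ∫ y in Ω, 1 / ‖x - y‖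

/-- `μ* = inf I[Ω]/|Ω|`. -/
def muStar : ℝ :=
  sInf {t : ℝ | ∃ Ω : Set E3, MeasurableSet Ω ∧ HasFinPer Ω ∧
    0 < volume Ω ∧ volume Ω < ⊤ ∧ t = II Ω / vol Ω}

/-- A minimizer for the isolated liquid drop problem. -/
def IsMinimizer (Ω : Set E3) : Prop :=
  MeasurableSet Ω ∧ HasFinPer Ω ∧ 0 < volume Ω ∧ volume Ω < ⊤ ∧ II Ω = muStar * vol Ω

/-- The set of masses of minimizers. -/
def minimizerMasses : Set ℝ := {m : ℝ | ∃ Ω : Set E3, IsMinimizer Ω ∧ m = vol Ω}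

/-- The largest mass of a minimizer. -/
def mStar : ℝ := sSup minimizerMasses

/-- The smallest mass of a minimizer. -/
def mStarStar : ℝ := sInf minimizerMasses

/-- `Λ` is an `(r,L)`-Lipschitz open set: near each boundary point it is, in a suitable
orthonormal coordinate system, the epigraph of an `L`-Lipschitz function. -/
def IsLipschitzDomain (r L : ℝ) (Λ : Set E3) : Prop :=
  ∀ x ∈ frontier Λ, ∃ (g : E3 ≃ᵢ E3) (f : ℝ × ℝ → ℝ),
    LipschitzWith L.toNNReal f ∧
    Λ ∩ ball x r = {y ∈ ball x r | f (g y 0, g y 1) < g y 2}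

/-- Fisher regularity of the boundary. -/
def FisherCond (C ℓ : ℝ) (Λ : Set E3) : Prop :=
  ∀ h : ℝ, 0 < h → h ≤ ℓ → (volume (frontier Λ + ball (0:E3) h)).toReal ≤ C * ℓ^2 * h

/-- An admissible sequence of domains for the thermodynamic limit. -/
def IsAdmissibleSeq (r L C : ℝ) (Λs : ℕ → Set E3) (ℓ : ℕ → ℝ) : Prop :=
  Tendsto ℓ atTop atTop ∧
  ∀ n : ℕ, IsOpen (Λs n) ∧ IsBounded (Λs n) ∧ IsLipschitzDomain r L (Λs n) ∧
    ball 0 (ℓ n / C) ⊆ Λs n ∧ Λs n ⊆ ball 0 (ℓ n) ∧ FisherCond C (ℓ n) (Λs n)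

/-- `e` is the thermodynamic limit function of the liquid drop model. -/
def IsThermoLimit (e : ℝ → ℝ) : Prop :=
  ∀ ρ : ℝ, 0 ≤ ρ → ρ ≤ 1 →
    ∀ (r L C : ℝ) (Λs : ℕ → Set E3) (ℓ : ℕ → ℝ), 0 < r → 0 < L → 0 < C →
      IsAdmissibleSeq r L C Λs ℓ →
      Tendsto (fun n => EE (Λs n) ρ / vol (Λs n)) atTop (𝓝 (e ρ))

/-- The domain for the `N`-particle Jellium problem: `N^{1/3} Λ₁` with `Λ₁` the ball of
unit volume centered at the origin. -/
def jelDomain (N : ℕ) : Set E3 :=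
  ball (0:E3) ((N : ℝ) ^ ((1:ℝ)/3) * (3 / (4 * Real.pi)) ^ ((1:ℝ)/3))

/-- The `N`-particle Jellium ground state energy. -/
def jelN (N : ℕ) : ℝ :=
  sInf {t : ℝ | ∃ x : Fin N → E3, (∀ j, x j ∈ jelDomain N) ∧
    t = (∑ j : Fin N, ∑ k : Fin N, if j < k then 1 / ‖x j - x k‖ else 0)
      - (∑ j : Fin N, ∫ y in jelDomain N, 1 / ‖x j - y‖)
      + (1/2) * ∫ x' in jelDomain N, ∫ y in jelDomain N, 1 / ‖x' - y‖}

/-- `eJ` is the Jellium energy per particle in the thermodynamic limit. -/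
def IsJelliumLimit (eJ : ℝ) : Prop :=
  Tendsto (fun N : ℕ => jelN N / (N : ℝ)) atTop (𝓝 eJ)

/-- The grand-canonical liquid drop energy `F_Λ(ρ)`. -/
def FF (Λ : Set E3) (ρ : ℝ) : ℝ :=
  sInf {t : ℝ | ∃ Ω : Set E3, MeasurableSet Ω ∧ Ω ⊆ Λ ∧ HasFinPer Ω ∧
    t = ldEnergy Λ ρ Ω - muStar * vol Ω}

/-- A tetrahedron: the interior of the convex hull of four affinely independent points. -/
def IsTetra (Δ : Set E3) : Prop :=
  ∃ v : Fin 4 → E3, AffineIndependent ℝ v ∧ Δ = interior (convexHull ℝ (Set.range v))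

/-- The open cube `(-L/2, L/2)³`. -/
def cubeL (Lside : ℝ) : Set E3 := {x : E3 | ∀ i, |x i| < Lside / 2}

/-- The grand-canonical Jellium energy of point particles of charge `m` in the domain `S`
with a uniform background of density one. -/
def pointJellium (m : ℝ) (S : Set E3) : ℝ :=
  sInf {t : ℝ | ∃ (n : ℕ) (x : Fin n → E3), (∀ j, x j ∈ S) ∧
    t = (∑ j : Fin n, ∑ k : Fin n, if j < k then m^2 / ‖x j - x k‖ else 0)
      - m * (∑ j : Fin n, ∫ y in S, 1 / ‖x j - y‖)
      + (1/2) * ∫ x' in S, ∫ y in S, 1 / ‖x' - y‖}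

/-- The conclusions of the decomposition theorem for minimizing sequences. -/
def IsDecomp (Ω : ℕ → Set E3) (m : ℝ) (K : ℕ) (Ωs : Fin K → Set E3)
    (a : ℕ → Fin K → E3) (R : ℝ) (φ : ℕ → ℕ) : Prop :=
  StrictMono φ ∧ 0 < R ∧
  (∀ j k : Fin K, j ≠ k → Tendsto (fun n => ‖a n j - a n k‖) atTop atTop) ∧
  (∀ j, IsMinimizer (Ωs j)) ∧
  (∀ j, mStarStar ≤ vol (Ωs j) ∧ vol (Ωs j) ≤ mStar) ∧
  (∀ j, Tendsto
    (fun n => volume (symmDiff ({x : E3 | x + a n j ∈ Ω (φ n)} ∩ ball (0:E3) R) (Ωs j)))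
    atTop (𝓝 0)) ∧
  Tendsto (fun n => volume (Ω (φ n) \ ⋃ j, ball (a n j) R)) atTop (𝓝 0) ∧
  Tendsto (fun n => per (Ω (φ n) \ ⋃ j, ball (a n j) R)) atTop (𝓝 0) ∧
  m = ∑ j, vol (Ωs j) ∧
  (2 ≤ K → ∃ ε : ℕ → ℝ, Tendsto ε atTop (𝓝 0) ∧ ∀ n : ℕ,
    muStar * vol (Ω (φ n)) +
      (∑ j : Fin K, ∑ k : Fin K,
        if j < k then (vol (Ωs j) * vol (Ωs k) + ε n) / ‖a n j - a n k‖ else 0)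
      ≤ II (Ω (φ n)))

instance : MeasurableSpace (Matrix (Fin 3) (Fin 3) ℝ) :=
  (inferInstance : MeasurableSpace (Fin 3 → Fin 3 → ℝ))

/-- The rotation group SO(3), as a set of matrices. -/
def SO3 : Set (Matrix (Fin 3) (Fin 3) ℝ) := {R | R * R.transpose = 1 ∧ R.det = 1}

/-- The action of a matrix on Euclidean space. -/
def rot (R : Matrix (Fin 3) (Fin 3) ℝ) (x : E3) : E3 :=
  (EuclideanSpace.equiv (Fin 3) ℝ).symm (R.mulVec (EuclideanSpace.equiv (Fin 3) ℝ x))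

/-- The image of a set under the rigid motion `x ↦ Rx + τ`. -/
def rigidImage (R : Matrix (Fin 3) (Fin 3) ℝ) (τ : E3) (S : Set E3) : Set E3 :=
  (fun x => rot R x + τ) '' S

/-- `μ` is the normalized Haar measure of SO(3): a probability measure concentrated on SO(3)
which is invariant under left multiplication by rotations. -/
def IsHaarSO3 (μ : Measure (Matrix (Fin 3) (Fin 3) ℝ)) : Prop :=
  IsProbabilityMeasure μ ∧ μ SO3ᶜ = 0 ∧ ∀ S ∈ SO3, Measure.map (fun R => S * R) μ = μ

/-- The cube of the tiling of side length `ε` indexed by `z ∈ ℤ³`. -/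
def cubeZ (ε : ℝ) (z : Fin 3 → ℤ) : Set E3 := {x : E3 | ∀ i, |x i - ε * (z i : ℝ)| < ε / 2}

/-- The distance between two sets. -/
def setDist (s t : Set E3) : ℝ := sInf {d : ℝ | ∃ p ∈ s, ∃ q ∈ t, d = dist p q}

/-- The outer cubic boundary layer of `Λ` at scale `ε`. -/
def outerLayer (Λ : Set E3) (ε : ℝ) : Set E3 :=
  ⋃ z ∈ {z : Fin 3 → ℤ | setDist (cubeZ ε z) (frontier Λ) ≤ ε}, closure (cubeZ ε z \ Λ)

/-- **A single droplet for small `C`**: if `C < m**²/diam(A)`, then any decomposition as produced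
by the decomposition theorem (with rescaled centers converging to distinct points of the closure
of `A`) has exactly one droplet, `K = 1`. -/
theorem single_droplet_of_small_constant (A : Set E3) (hAo : IsOpen A) (hAb : IsBounded A)
    (Ω : ℕ → Set E3) (hmeas : ∀ n, MeasurableSet (Ω n)) (hper : ∀ n, HasFinPer (Ω n))
    (hfin : ∀ n, volume (Ω n) < ⊤)
    (ℓ : ℕ → ℝ) (hℓ : Tendsto ℓ atTop atTop) (hsub : ∀ n, Ω n ⊆ ℓ n • A)
    (m : ℝ) (hm : 0 < m) (hvol : Tendsto (fun n => vol (Ω n)) atTop (𝓝 m))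
    (C : ℝ) (hI : ∀ n, II (Ω n) ≤ muStar * vol (Ω n) + C / ℓ n)
    (hC : C < mStarStar ^ 2 / Metric.diam A) :
    ∀ (K : ℕ) (Ωs : Fin K → Set E3) (a : ℕ → Fin K → E3) (R : ℝ) (φ : ℕ → ℕ)
      (y : Fin K → E3),
      1 ≤ K → IsDecomp Ω m K Ωs a R φ →
      (∀ j, Tendsto (fun n => (ℓ (φ n))⁻¹ • a n j) atTop (𝓝 (y j))) →
      Function.Injective y → (∀ j, y j ∈ closure A) →
      K = 1 := by
  intro K Ωs a R φ y hK hdec hy hyinj hycl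
  by_contra hKne
  have hK2 : 2 ≤ K := by omega
  obtain ⟨hφmono, hR, hdiv, hmin, hmass, h5, h6, h7, hsum, hK2imp⟩ := hdec
  obtain ⟨ε, hεt, hkey⟩ := hK2imp hK2
  haveI : Nonempty (Fin K) := ⟨⟨0, by omega⟩⟩
  set i0 : Fin K := ⟨0, by omega⟩ with hi0
  set i1 : Fin K := ⟨1, by omega⟩ with hi1
  have hi01 : i0 < i1 := by simp [hi0, hi1, Fin.mk_lt_mk]
  have hvolpos : ∀ j, 0 < vol (Ωs j) := fun j =>
    ENNReal.toReal_pos (hmin j).2.2.1.ne' (hmin j).2.2.2.1.ne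
  set p : ℝ := Finset.univ.inf' Finset.univ_nonempty (fun j => vol (Ωs j)) with hp
  have hppos : 0 < p := by
    rw [hp, Finset.lt_inf'_iff]; intro j _; exact hvolpos j
  have hple : ∀ j, p ≤ vol (Ωs j) := fun j => Finset.inf'_le _ (Finset.mem_univ j)
  have hyne : y i0 ≠ y i1 := hyinj.ne hi01.ne
  set L : ℝ := ‖y i0 - y i1‖ with hL
  have hLpos : 0 < L := by
    simpa [hL, norm_pos_iff, sub_ne_zero] using hyne
  have hq : Tendsto (fun n => ‖(ℓ (φ n))⁻¹ • (a n i0 - a n i1)‖) atTop (𝓝 L) := by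
    have := ((hy i0).sub (hy i1)).norm
    simpa [smul_sub] using this
  have hℓφ : Tendsto (fun n => ℓ (φ n)) atTop atTop := hℓ.comp hφmono.tendsto_atTop
  have hE1 : ∀ᶠ n in atTop, 0 < ℓ (φ n) := hℓφ.eventually_gt_atTop 0
  have hE2 : ∀ᶠ n in atTop, -(p * p) < ε n :=
    hεt.eventually (eventually_gt_nhds (neg_neg_of_pos (by positivity)))
  have hmainev : ∀ᶠ n in atTop,
      (vol (Ωs i0) * vol (Ωs i1) + ε n) / ‖(ℓ (φ n))⁻¹ • (a n i0 - a n i1)‖ ≤ C := by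
    filter_upwards [hE1, hE2] with n hℓn hεn
    have hSC : (∑ j : Fin K, ∑ k : Fin K,
        if j < k then (vol (Ωs j) * vol (Ωs k) + ε n) / ‖a n j - a n k‖ else 0)
        ≤ C / ℓ (φ n) := by
      have h1 := hkey n
      have h2 := hI (φ n)
      linarith
    have hterm_nonneg : ∀ j k : Fin K,
        0 ≤ (if j < k then (vol (Ωs j) * vol (Ωs k) + ε n) / ‖a n j - a n k‖ else 0) := by
      intro j k
      split
      · apply div_nonneg _ (norm_nonneg _)
        have hpp : p * p ≤ vol (Ωs j) * vol (Ωs k) :=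
          mul_le_mul (hple j) (hple k) hppos.le (hvolpos j).le
        linarith
      · exact le_rfl
    have hsingle : (vol (Ωs i0) * vol (Ωs i1) + ε n) / ‖a n i0 - a n i1‖ ≤
        ∑ j : Fin K, ∑ k : Fin K,
          if j < k then (vol (Ωs j) * vol (Ωs k) + ε n) / ‖a n j - a n k‖ else 0 := by
      calc (vol (Ωs i0) * vol (Ωs i1) + ε n) / ‖a n i0 - a n i1‖
          = (if i0 < i1 then (vol (Ωs i0) * vol (Ωs i1) + ε n) / ‖a n i0 - a n i1‖ else 0) := by
            rw [if_pos hi01]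
        _ ≤ ∑ k : Fin K,
            if i0 < k then (vol (Ωs i0) * vol (Ωs k) + ε n) / ‖a n i0 - a n k‖ else 0 :=
            Finset.single_le_sum (fun k _ => hterm_nonneg i0 k) (Finset.mem_univ i1)
        _ ≤ ∑ j : Fin K, ∑ k : Fin K,
            if j < k then (vol (Ωs j) * vol (Ωs k) + ε n) / ‖a n j - a n k‖ else 0 :=
            Finset.single_le_sum
              (fun j _ => Finset.sum_nonneg fun k _ => hterm_nonneg j k) (Finset.mem_univ i0)
    have hmul : (vol (Ωs i0) * vol (Ωs i1) + ε n) / ‖a n i0 - a n i1‖ * ℓ (φ n) ≤ C := by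
      have := mul_le_mul_of_nonneg_right (hsingle.trans hSC) hℓn.le
      rwa [div_mul_cancel₀ _ hℓn.ne'] at this
    have heq : (vol (Ωs i0) * vol (Ωs i1) + ε n) / ‖(ℓ (φ n))⁻¹ • (a n i0 - a n i1)‖
        = (vol (Ωs i0) * vol (Ωs i1) + ε n) / ‖a n i0 - a n i1‖ * ℓ (φ n) := by
      rw [norm_smul, norm_inv, Real.norm_eq_abs, abs_of_pos hℓn, ← div_div, div_eq_mul_inv _ (ℓ (φ n))⁻¹, inv_inv,
        mul_div_right_comm]
    rw [heq]
    exact hmul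
  have hlim : Tendsto (fun n => (vol (Ωs i0) * vol (Ωs i1) + ε n) /
      ‖(ℓ (φ n))⁻¹ • (a n i0 - a n i1)‖) atTop (𝓝 ((vol (Ωs i0) * vol (Ωs i1)) / L)) := by
    have h0 : Tendsto (fun n => vol (Ωs i0) * vol (Ωs i1) + ε n) atTop
        (𝓝 (vol (Ωs i0) * vol (Ωs i1) + 0)) := tendsto_const_nhds.add hεt
    rw [add_zero] at h0; exact h0.div hq hLpos.ne'
  have hfinal : vol (Ωs i0) * vol (Ωs i1) / L ≤ C := le_of_tendsto hlim hmainev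
  have hmss : 0 ≤ mStarStar := by
    apply Real.sInf_nonneg
    rintro x ⟨Ω', _, rfl⟩
    exact ENNReal.toReal_nonneg
  have hLdiam : L ≤ Metric.diam A := by
    have := Metric.dist_le_diam_of_mem hAb.closure (hycl i0) (hycl i1)
    rw [Metric.diam_closure] at this
    simpa [hL, dist_eq_norm] using this
  have hsq : mStarStar ^ 2 ≤ vol (Ωs i0) * vol (Ωs i1) := by
    rw [sq]
    exact mul_le_mul (hmass i0).1 (hmass i1).1 hmss (hvolpos i0).le
  have h1 : mStarStar ^ 2 / Metric.diam A ≤ mStarStar ^ 2 / L := by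
    gcongr
  have h2 : mStarStar ^ 2 / L ≤ vol (Ωs i0) * vol (Ωs i1) / L := by gcongr
  linarith

end
end

section
/- Let (f_j)_{j≥0} be a sequence of real numbers that is bounded from below, let 0 < γ < 1, and let (δ_j)_{j≥0} be a summable sequence of nonnegative numbers such that f_K ≤ ((1−γ)/γ) Σ_{j=0}^{K−1} γ^{K−j} f_j + δ_K for all K ≥ 1. Then the sequence (f_K) converges as K → ∞. -/
open MeasureTheory Metric Set Filter Bornology
open scoped Topology ENNReal NNReal Pointwise

noncomputable section

/-- **Convergence lemma for geometrically weighted subadditive sequences**: if `f` is bounded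
below and `f K ≤ ((1-γ)/γ) Σ_{j<K} γ^{K-j} f j + δ K` for all `K ≥ 1`, with `0 < γ < 1` and
`δ ≥ 0` summable, then `f` converges. -/
theorem weighted_subadditive_converges (f : ℕ → ℝ) (hbdd : BddBelow (Set.range f))
    (γ : ℝ) (hγ0 : 0 < γ) (hγ1 : γ < 1)
    (δ : ℕ → ℝ) (hδ0 : ∀ j, 0 ≤ δ j) (hδsum : Summable δ)
    (hrec : ∀ K : ℕ, 1 ≤ K →
      f K ≤ (1 - γ) / γ * ∑ j ∈ Finset.range K, γ ^ (K - j) * f j + δ K) :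
    ∃ l : ℝ, Tendsto f atTop (𝓝 l) := by
  obtain ⟨m0, hm0⟩ := hbdd
  have hmf0 : ∀ K, m0 ≤ f K := fun K => hm0 ⟨K, rfl⟩
  set m : ℝ := min m0 0 with hmdef
  have hmneg : m ≤ 0 := min_le_right _ _
  have hmf : ∀ K, m ≤ f K := fun K => le_trans (min_le_left _ _) (hmf0 K)
  have hγ1' : (0:ℝ) < 1 - γ := by linarith
  set w : ℕ → ℝ := fun K => (1 - γ) / γ * ∑ j ∈ Finset.range K, γ ^ (K - j) * f j with hw
  have key : ∀ K, w (K + 1) = γ * w K + (1 - γ) * f K := by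
    intro K
    have hsum : ∑ j ∈ Finset.range (K + 1), γ ^ (K + 1 - j) * f j
        = γ * (∑ j ∈ Finset.range K, γ ^ (K - j) * f j) + γ * f K := by
      rw [Finset.sum_range_succ, Finset.mul_sum]
      congr 1
      · apply Finset.sum_congr rfl
        intro j hj
        have hle : K + 1 - j = (K - j) + 1 := by
          have := Finset.mem_range.mp hj; omega
        rw [hle, pow_succ]; ring
      · simp
    show (1 - γ) / γ * ∑ j ∈ Finset.range (K + 1), γ ^ (K + 1 - j) * f j
        = γ * ((1 - γ) / γ * ∑ j ∈ Finset.range K, γ ^ (K - j) * f j) + (1 - γ) * f K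
    rw [hsum]
    field_simp
  have hwlb : ∀ K, m ≤ w K := by
    intro K
    induction K with
    | zero => simpa [hw] using hmneg
    | succ K ih =>
      rw [key K]
      nlinarith [hmf K]
  have hwstep : ∀ K, 1 ≤ K → w (K + 1) ≤ w K + (1 - γ) * δ K := by
    intro K hK
    have h1 : f K ≤ w K + δ K := hrec K hK
    rw [key K]
    nlinarith [h1]
  set T : ℕ → ℝ := fun K => (∑' n, δ n) - ∑ j ∈ Finset.range K, δ j with hT
  have hT0 : ∀ K, 0 ≤ T K := fun K =>
    sub_nonneg.mpr (Summable.sum_le_tsum _ (fun i _ => hδ0 i) hδsum)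
  have hTstep : ∀ K, T (K + 1) = T K - δ K := by
    intro K
    show (∑' n, δ n) - ∑ j ∈ Finset.range (K + 1), δ j
        = ((∑' n, δ n) - ∑ j ∈ Finset.range K, δ j) - δ K
    rw [Finset.sum_range_succ]; ring
  have hTlim : Tendsto T atTop (𝓝 0) := by
    have h := hδsum.hasSum.tendsto_sum_nat
    have h2 : Tendsto (fun K => (∑' n, δ n) - ∑ j ∈ Finset.range K, δ j) atTop
        (𝓝 ((∑' n, δ n) - ∑' n, δ n)) := tendsto_const_nhds.sub h
    simpa using h2
  set v : ℕ → ℝ := fun K => w K + (1 - γ) * T K with hv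
  have hvanti : ∀ K, 1 ≤ K → v (K + 1) ≤ v K := by
    intro K hK
    have h1 := hwstep K hK
    have h2 := hTstep K
    show w (K + 1) + (1 - γ) * T (K + 1) ≤ w K + (1 - γ) * T K
    rw [h2]
    nlinarith
  have hvlb : ∀ K, m ≤ v K := by
    intro K
    have := hwlb K
    have := hT0 K
    have : 0 ≤ (1 - γ) * T K := mul_nonneg (le_of_lt hγ1') (hT0 K)
    show m ≤ w K + (1 - γ) * T K
    linarith [hwlb K]
  obtain ⟨l, hslim⟩ : ∃ l, Tendsto (fun n => v (n + 1)) atTop (𝓝 l) := by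
    refine ⟨_, tendsto_atTop_ciInf (antitone_nat_of_succ_le fun n => ?_) ⟨m, ?_⟩⟩
    · exact hvanti (n + 1) (by omega)
    · rintro x ⟨n, rfl⟩
      exact hvlb _
  have hvlim : Tendsto v atTop (𝓝 l) := (tendsto_add_atTop_iff_nat 1).mp hslim
  have hwlim : Tendsto w atTop (𝓝 l) := by
    have h1 : Tendsto (fun K => v K - (1 - γ) * T K) atTop (𝓝 (l - (1 - γ) * 0)) :=
      hvlim.sub (tendsto_const_nhds.mul hTlim)
    have h2 : ∀ K, w K = v K - (1 - γ) * T K := by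
      intro K; show w K = (w K + (1 - γ) * T K) - (1 - γ) * T K; ring
    simpa [← h2] using h1
  refine ⟨l, ?_⟩
  have hf : ∀ K, f K = (w (K + 1) - γ * w K) / (1 - γ) := by
    intro K
    rw [eq_div_iff (by linarith : (1:ℝ) - γ ≠ 0)]
    linarith [key K]
  have hwshift : Tendsto (fun K => w (K + 1)) atTop (𝓝 l) :=
    hwlim.comp (tendsto_add_atTop_nat 1)
  have h1 : Tendsto (fun K => (w (K + 1) - γ * w K) / (1 - γ)) atTop
      (𝓝 ((l - γ * l) / (1 - γ))) :=
    (hwshift.sub (tendsto_const_nhds.mul hwlim)).div_const _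
  have h2 : (l - γ * l) / (1 - γ) = l := by
    rw [div_eq_iff (by linarith : (1:ℝ) - γ ≠ 0)]; ring
  rw [h2] at h1
  exact h1.congr fun K => (hf K).symm

end
end
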